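/- For every x⁰ ∈ X_M, along the nominal trajectory (with control u_nom) the limit x₁^∞ = lim_{t→∞} x₁(t) exists and ∫₀^∞ x₂(t) dt = (x₁⁰ − x₁^∞ + x₂⁰)/η (in particular this integral is finite). -/

import Mathlib

open MeasureTheory Set Filter Topology
open scoped ENNReal

noncomputable section

/-- A valid control: Lebesgue-measurable with values in
`U = [βmin, βnom] × [γnom, γmax]` for all `t ≥ 0`. -/
def IsCtrl (βmin βnom γnom γmax : ℝ) (u₁ u₂ : ℝ → ℝ) : Prop :=
  Measurable u₁ ∧ Measurable u₂ ∧
    ∀ t : ℝ, 0 ≤ t → u₁ t ∈ Icc βmin βnom ∧ u₂ t ∈ Icc γnom γmax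

/-- The SEIR trajectory: a (locally absolutely continuous) solution of the SEIR
system, written in integral form. -/
def IsTraj (η : ℝ) (u₁ u₂ x₁ x₂ x₃ : ℝ → ℝ) : Prop :=
  ContinuousOn x₁ (Ici 0) ∧ ContinuousOn x₂ (Ici 0) ∧ ContinuousOn x₃ (Ici 0) ∧
    (∀ t : ℝ, 0 ≤ t → x₁ t = x₁ 0 + ∫ s in (0:ℝ)..t, -(u₁ s * x₁ s * x₃ s)) ∧
    (∀ t : ℝ, 0 ≤ t → x₂ t = x₂ 0 + ∫ s in (0:ℝ)..t, (u₁ s * x₁ s * x₃ s - η * x₂ s)) ∧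
    (∀ t : ℝ, 0 ≤ t → x₃ t = x₃ 0 + ∫ s in (0:ℝ)..t, (η * x₂ s - u₂ s * x₃ s))

/-- The state constraint set `X = {x ∈ [0,1]³ : x₃ ≤ Imax ∧ x₁ + x₂ + x₃ ≤ 1}`. -/
def InX (Imax a b c : ℝ) : Prop :=
  a ∈ Icc (0:ℝ) 1 ∧ b ∈ Icc (0:ℝ) 1 ∧ c ∈ Icc (0:ℝ) 1 ∧ c ≤ Imax ∧ a + b + c ≤ 1

/-- The invariant box `X_M = {x ∈ X : x₁ ≤ γnom/βnom ∧ x₂ ≤ γnom Imax / η}`. -/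
def InXM (η βnom γnom Imax a b c : ℝ) : Prop :=
  InX Imax a b c ∧ a ≤ γnom / βnom ∧ b ≤ γnom * Imax / η

/-- The admissible set `A`: states in `X` from which some control keeps the
trajectory in `X` for all `t ≥ 0`. -/
def InA (η βmin βnom γnom γmax Imax a b c : ℝ) : Prop :=
  InX Imax a b c ∧
    ∃ u₁ u₂ x₁ x₂ x₃ : ℝ → ℝ,
      IsCtrl βmin βnom γnom γmax u₁ u₂ ∧ IsTraj η u₁ u₂ x₁ x₂ x₃ ∧
        x₁ 0 = a ∧ x₂ 0 = b ∧ x₃ 0 = c ∧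
        ∀ t : ℝ, 0 ≤ t → InX Imax (x₁ t) (x₂ t) (x₃ t)

/-- The set `A' = A \ {x ∈ A : x₁ ≥ γnom/βnom ∧ x₃(x₂+x₃) < ε}`. -/
def InA' (η βmin βnom γnom γmax Imax ε a b c : ℝ) : Prop :=
  InA η βmin βnom γnom γmax Imax a b c ∧ ¬(γnom / βnom ≤ a ∧ c * (b + c) < ε)

/-- The quadratic stage cost `ℓ(x,u)`. -/
def stageCost (lam βnom γnom b c v₁ v₂ : ℝ) : ℝ :=
  lam * (b ^ 2 + c ^ 2) + (1 - lam) * ((v₁ - βnom) ^ 2 + (v₂ - γnom) ^ 2)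

/-- The finite-horizon value function `V_T(x⁰)` (with value `∞` if infeasible). -/
def Vfin (η βmin βnom γnom γmax Imax lam T a b c : ℝ) : ℝ≥0∞ :=
  sInf { J : ℝ≥0∞ | ∃ u₁ u₂ x₁ x₂ x₃ : ℝ → ℝ,
    IsCtrl βmin βnom γnom γmax u₁ u₂ ∧ IsTraj η u₁ u₂ x₁ x₂ x₃ ∧
      x₁ 0 = a ∧ x₂ 0 = b ∧ x₃ 0 = c ∧
      (∀ t ∈ Icc (0:ℝ) T, InX Imax (x₁ t) (x₂ t) (x₃ t)) ∧
      J = ∫⁻ s in Ioc (0:ℝ) T,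
            ENNReal.ofReal (stageCost lam βnom γnom (x₂ s) (x₃ s) (u₁ s) (u₂ s)) }

/-- The infinite-horizon value function `V_∞(x⁰)` (with value `∞` if infeasible). -/
def Vinf (η βmin βnom γnom γmax Imax lam a b c : ℝ) : ℝ≥0∞ :=
  sInf { J : ℝ≥0∞ | ∃ u₁ u₂ x₁ x₂ x₃ : ℝ → ℝ,
    IsCtrl βmin βnom γnom γmax u₁ u₂ ∧ IsTraj η u₁ u₂ x₁ x₂ x₃ ∧
      x₁ 0 = a ∧ x₂ 0 = b ∧ x₃ 0 = c ∧
      (∀ t : ℝ, 0 ≤ t → InX Imax (x₁ t) (x₂ t) (x₃ t)) ∧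
      J = ∫⁻ s in Ioi (0:ℝ),
            ENNReal.ofReal (stageCost lam βnom γnom (x₂ s) (x₃ s) (u₁ s) (u₂ s)) }

/-!
Along the nominal flow `x₁ = x₁⁰ exp (-β ∫₀ᵗ x₃)` stays nonnegative, and so do `x₂` and `x₃`:
the first zero of `x₂ + ε e^{Kt}` or `x₃ + ε e^{Kt}` would be a point where that function has
positive derivative although it decreases to `0` there. Then `x₁⁰ - x₁(t) = ∫₀ᵗ β x₁ x₃` makes
`β x₁ x₃` integrable and `x₁` convergent, and the conservation law
`x₁ + x₂ + η ∫₀ᵗ x₂ = x₁⁰ + x₂⁰` bounds `∫₀ᵗ x₂`, so `x₂` is integrable. The same law shows that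
`x₂` has a limit, which must be `0` for an integrable function; letting `t → ∞` in the law gives
the value of the integral.
-/

theorem HasDerivAt.nonpos_of_isMinOn_Icc {f : ℝ → ℝ} {f' a b : ℝ} (hf : HasDerivAt f f' b)
    (hab : a < b) (hmin : IsMinOn f (Icc a b) b) : f' ≤ 0 := by
  have hcone : a - b ∈ posTangentConeAt (Icc a b) b :=
    sub_mem_posTangentConeAt_of_segment_subset (segment_symm ℝ b a ▸ segment_subset_Icc hab.le)
  have h := hmin.localize.hasFDerivWithinAt_nonneg hf.hasFDerivAt.hasFDerivWithinAt hcone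
  simp only [ContinuousLinearMap.toSpanSingleton_apply, smul_eq_mul] at h
  exact nonpos_of_mul_nonneg_right h (sub_neg.2 hab)

theorem ContinuousOn.exists_first_zero {f : ℝ → ℝ} {a b : ℝ} (hf : ContinuousOn f (Icc a b))
    (ha : 0 < f a) (hnonpos : ∃ t ∈ Icc a b, f t ≤ 0) :
    ∃ τ ∈ Ioc a b, f τ = 0 ∧ ∀ t ∈ Ico a τ, 0 < f t := by
  set S := Icc a b ∩ f ⁻¹' Iic 0
  have hS : IsClosed S := hf.preimage_isClosed_of_isClosed isClosed_Icc isClosed_Iic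
  have hSbdd : BddBelow S := ⟨a, fun t ht => ht.1.1⟩
  have hτ : sInf S ∈ S := hS.csInf_mem hnonpos hSbdd
  have hbefore : ∀ t ∈ Ico a (sInf S), 0 < f t := fun t ht =>
    not_le.mp fun h => notMem_of_lt_csInf ht.2 hSbdd ⟨⟨ht.1, ht.2.le.trans hτ.1.2⟩, h⟩
  have haτ : a < sInf S := hτ.1.1.lt_of_ne fun h => (h ▸ hτ.2 : f a ≤ 0).not_gt ha
  refine ⟨sInf S, ⟨haτ, hτ.1.2⟩, le_antisymm hτ.2 ?_, hbefore⟩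
  have hcl : sInf S ∈ closure (Ico a (sInf S)) := by
    rw [closure_Ico haτ.ne]
    exact ⟨haτ.le, le_rfl⟩
  have : (𝓝[Ico a (sInf S)] sInf S).NeBot := mem_closure_iff_nhdsWithin_neBot.mp hcl
  exact ge_of_tendsto
    ((hf _ hτ.1).mono (Ico_subset_Icc_self.trans (Icc_subset_Icc_right hτ.1.2)))
    (eventually_nhdsWithin_of_forall fun t ht => (hbefore t ht).le)

theorem pos_of_deriv_pos_at_first_zero {v w v' w' : ℝ → ℝ} {a b : ℝ}
    (hv : ContinuousOn v (Icc a b)) (hw : ContinuousOn w (Icc a b))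
    (hv' : ∀ t ∈ Ioc a b, HasDerivAt v (v' t) t) (hw' : ∀ t ∈ Ioc a b, HasDerivAt w (w' t) t)
    (hva : 0 < v a) (hwa : 0 < w a)
    (hv_zero : ∀ t ∈ Ioc a b, v t = 0 → 0 ≤ w t → 0 < v' t)
    (hw_zero : ∀ t ∈ Ioc a b, w t = 0 → 0 ≤ v t → 0 < w' t) :
    ∀ t ∈ Icc a b, 0 < v t ∧ 0 < w t := by
  by_contra! h
  obtain ⟨t₀, ht₀, hbad⟩ := h
  have hmin : ContinuousOn (fun t => min (v t) (w t)) (Icc a b) := hv.inf hw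
  obtain ⟨τ, hτ, hzero, hbefore⟩ := hmin.exists_first_zero (lt_min hva hwa)
    ⟨t₀, ht₀, min_le_iff.mpr ((le_or_gt (v t₀) 0).imp id hbad)⟩
  have hvτ : 0 ≤ v τ := hzero ▸ min_le_left _ _
  have hwτ : 0 ≤ w τ := hzero ▸ min_le_right _ _
  have isMinOn_of_zero : ∀ g : ℝ → ℝ, (∀ t ∈ Ico a τ, 0 < min (v t) (w t) → 0 < g t) →
      g τ = 0 → IsMinOn g (Icc a τ) τ := by
    intro g hg hgτ
    refine isMinOn_iff.mpr fun t ht => ?_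
    rcases ht.2.eq_or_lt with rfl | hlt
    · exact le_rfl
    · exact hgτ ▸ (hg t ⟨ht.1, hlt⟩ (hbefore t ⟨ht.1, hlt⟩)).le
  rcases min_choice (v τ) (w τ) with hminv | hminw
  · have hv0 : v τ = 0 := hminv ▸ hzero
    exact (hv_zero τ hτ hv0 hwτ).not_ge <| (hv' τ hτ).nonpos_of_isMinOn_Icc hτ.1 <|
      isMinOn_of_zero v (fun _ _ h => (lt_min_iff.mp h).1) hv0
  · have hw0 : w τ = 0 := hminw ▸ hzero
    exact (hw_zero τ hτ hw0 hvτ).not_ge <| (hw' τ hτ).nonpos_of_isMinOn_Icc hτ.1 <|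
      isMinOn_of_zero w (fun _ _ h => (lt_min_iff.mp h).2) hw0

theorem hasDerivAt_of_eq_add_integral {f g : ℝ → ℝ} {a t : ℝ} (hf : ContinuousOn f (Ici a))
    (hg : ∀ s ≥ a, g s = g a + ∫ r in a..s, f r) (ht : a < t) : HasDerivAt g (f t) t := by
  have hint : IntervalIntegrable f volume a t :=
    (hf.mono Icc_subset_Ici_self).intervalIntegrable_of_Icc ht.le
  have hmeas : StronglyMeasurableAtFilter f (𝓝 t) :=
    (hf.mono Ioi_subset_Ici_self).stronglyMeasurableAtFilter isOpen_Ioi t ht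
  exact ((intervalIntegral.integral_hasDerivAt_right hint hmeas
    (hf.continuousAt (Ici_mem_nhds ht))).const_add (g a)).congr_of_eventuallyEq
    (eventually_of_mem (Ici_mem_nhds ht) hg)

theorem eq_mul_exp_neg_integral_of_hasDerivAt {x g : ℝ → ℝ} {a t : ℝ}
    (hx : ContinuousOn x (Ici a)) (hg : ContinuousOn g (Ici a))
    (hd : ∀ s > a, HasDerivAt x (-(g s * x s)) s) (ht : a ≤ t) :
    x t = x a * Real.exp (-∫ s in a..t, g s) := by
  set G : ℝ → ℝ := fun s => ∫ r in a..s, g r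
  set φ : ℝ → ℝ := fun s => x s * Real.exp (G s)
  suffices hφ : φ t = φ a by
    simp only [φ, G, intervalIntegral.integral_same, Real.exp_zero, mul_one] at hφ
    rw [← hφ, mul_assoc, ← Real.exp_add, add_neg_cancel, Real.exp_zero, mul_one]
  rcases ht.eq_or_lt with rfl | hat
  · rfl
  have hGcont : ContinuousOn G (Icc a t) := by
    simpa only [uIcc_of_le ht] using intervalIntegral.continuousOn_primitive_interval
      (((hg.mono Icc_subset_Ici_self).integrableOn_Icc).mono_set (uIcc_of_le ht).subset)
  have hφcont : ContinuousOn φ (Icc a t) :=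
    (hx.mono Icc_subset_Ici_self).mul (Real.continuous_exp.comp_continuousOn hGcont)
  have hφderiv : ∀ s ∈ Ioo a t, HasDerivAt φ 0 s := fun s hs => by
    have hG : HasDerivAt G (g s) s := hasDerivAt_of_eq_add_integral hg (by simp [G]) hs.1
    exact ((hd s hs.1).mul hG.exp).congr_deriv (by ring)
  obtain ⟨c, -, hc⟩ := exists_hasDerivAt_eq_slope φ (fun _ => 0) hat hφcont hφderiv
  rw [eq_comm, div_eq_zero_iff, sub_eq_zero] at hc
  exact hc.resolve_right (sub_ne_zero.mpr hat.ne')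

theorem integrableOn_Ioi_of_nonneg_of_intervalIntegral_le {f : ℝ → ℝ} {a M : ℝ}
    (hf : ContinuousOn f (Ici a)) (hf0 : ∀ t ≥ a, 0 ≤ f t)
    (hM : ∀ t ≥ a, ∫ s in a..t, f s ≤ M) : IntegrableOn f (Ioi a) := by
  refine integrableOn_Ioi_of_intervalIntegral_norm_bounded M a (fun t => ?_) tendsto_id ?_
  · exact ((hf.mono Icc_subset_Ici_self).integrableOn_Icc).mono_set Ioc_subset_Icc_self
  · filter_upwards [eventually_ge_atTop a] with t ht
    rw [intervalIntegral.integral_congr fun s hs => Real.norm_of_nonneg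
      (hf0 s (uIcc_of_le ht ▸ hs).1)]
    exact hM t ht

theorem eq_zero_of_tendsto_of_integrableOn_Ioi {E : Type*} [NormedAddCommGroup E] {f : ℝ → E}
    {a : ℝ} {L : E} (hf : IntegrableOn f (Ioi a)) (hL : Tendsto f atTop (𝓝 L)) : L = 0 := by
  refine IntegrableAtFilter.eq_zero_of_tendsto ⟨Ioi a, Ioi_mem_atTop a, hf⟩ (fun s hs => ?_) hL
  obtain ⟨b, hb⟩ := mem_atTop_sets.mp hs
  exact top_le_iff.mp (Real.volume_Ici (a := b) ▸ measure_mono hb)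

namespace IsTraj

variable {η β γ : ℝ} {x₁ x₂ x₃ : ℝ → ℝ}

theorem hasDerivAt (hx : IsTraj η (fun _ => β) (fun _ => γ) x₁ x₂ x₃) {t : ℝ} (ht : 0 < t) :
    HasDerivAt x₁ (-(β * x₁ t * x₃ t)) t ∧ HasDerivAt x₂ (β * x₁ t * x₃ t - η * x₂ t) t ∧
      HasDerivAt x₃ (η * x₂ t - γ * x₃ t) t := by
  obtain ⟨h₁, h₂, h₃, e₁, e₂, e₃⟩ := hx
  exact ⟨hasDerivAt_of_eq_add_integral (by fun_prop) e₁ ht,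
    hasDerivAt_of_eq_add_integral (by fun_prop) e₂ ht,
    hasDerivAt_of_eq_add_integral (by fun_prop) e₃ ht⟩

theorem x₁_eq_mul_exp (hx : IsTraj η (fun _ => β) (fun _ => γ) x₁ x₂ x₃) {t : ℝ} (ht : 0 ≤ t) :
    x₁ t = x₁ 0 * Real.exp (-∫ s in (0:ℝ)..t, β * x₃ s) :=
  eq_mul_exp_neg_integral_of_hasDerivAt hx.1 (continuousOn_const.mul hx.2.2.1)
    (fun _ hs => (hx.hasDerivAt hs).1.congr_deriv (by ring)) ht

theorem x₁_nonneg (hx : IsTraj η (fun _ => β) (fun _ => γ) x₁ x₂ x₃) (h₁ : 0 ≤ x₁ 0) {t : ℝ}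
    (ht : 0 ≤ t) : 0 ≤ x₁ t := by
  rw [hx.x₁_eq_mul_exp ht]
  positivity

theorem pos_add_mul_exp (hx : IsTraj η (fun _ => β) (fun _ => γ) x₁ x₂ x₃) (hη : 0 ≤ η)
    {T K ε : ℝ} (hx₁ : ∀ t ∈ Icc 0 T, 0 ≤ β * x₁ t) (hK₁ : ∀ t ∈ Icc 0 T, β * x₁ t < K)
    (hK₂ : η - γ < K) (h₂ : 0 ≤ x₂ 0) (h₃ : 0 ≤ x₃ 0) (hε : 0 < ε) :
    ∀ t ∈ Icc 0 T, 0 < x₂ t + ε * Real.exp (K * t) ∧ 0 < x₃ t + ε * Real.exp (K * t) := by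
  have hE : ∀ t, HasDerivAt (fun s => ε * Real.exp (K * s)) (K * (ε * Real.exp (K * t))) t :=
    fun t => (((hasDerivAt_id t).const_mul K).exp.const_mul ε).congr_deriv
      (by simp only [id_eq, mul_one]; ring)
  have h₂c : ContinuousOn x₂ (Icc 0 T) := hx.2.1.mono Icc_subset_Ici_self
  have h₃c : ContinuousOn x₃ (Icc 0 T) := hx.2.2.1.mono Icc_subset_Ici_self
  refine pos_of_deriv_pos_at_first_zero (by fun_prop) (by fun_prop)
    (fun t ht => (hx.hasDerivAt ht.1).2.1.add (hE t))
    (fun t ht => (hx.hasDerivAt ht.1).2.2.add (hE t))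
    (by simp only [mul_zero, Real.exp_zero, mul_one]; linarith)
    (by simp only [mul_zero, Real.exp_zero, mul_one]; linarith)
    (fun t ht hv hw => ?_) (fun t ht hw hv => ?_)
  all_goals
    have he : 0 < ε * Real.exp (K * t) := by positivity
    have hKt := hK₁ t (Ioc_subset_Icc_self ht)
    have hβx := hx₁ t (Ioc_subset_Icc_self ht)
  · have hx₃ := mul_le_mul_of_nonneg_left (show -(ε * Real.exp (K * t)) ≤ x₃ t by linarith) hβx
    nlinarith
  · nlinarith

theorem x₂_nonneg_and_x₃_nonneg (hx : IsTraj η (fun _ => β) (fun _ => γ) x₁ x₂ x₃) (hβ : 0 ≤ β)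
    (hη : 0 ≤ η) (h₁ : 0 ≤ x₁ 0) (h₂ : 0 ≤ x₂ 0) (h₃ : 0 ≤ x₃ 0) {T : ℝ} (hT : 0 ≤ T) :
    0 ≤ x₂ T ∧ 0 ≤ x₃ T := by
  have h₁c : ContinuousOn x₁ (Icc 0 T) := hx.1.mono Icc_subset_Ici_self
  obtain ⟨C, hC⟩ := isCompact_Icc.exists_bound_of_continuousOn h₁c
  set K := β * C + |η - γ| + 1
  have hβx₁ : ∀ t ∈ Icc 0 T, 0 ≤ β * x₁ t := fun t ht => mul_nonneg hβ (hx.x₁_nonneg h₁ ht.1)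
  have hK₁ : ∀ t ∈ Icc 0 T, β * x₁ t < K := fun t ht => by
    have := mul_le_mul_of_nonneg_left ((le_abs_self _).trans (hC t ht)) hβ
    linarith [abs_nonneg (η - γ)]
  have hK₂ : η - γ < K := by
    have hC₀ : 0 ≤ C := (norm_nonneg _).trans (hC 0 ⟨le_rfl, hT⟩)
    linarith [mul_nonneg hβ hC₀, le_abs_self (η - γ)]
  have hpos : ∀ ε > 0, 0 < x₂ T + ε * Real.exp (K * T) ∧ 0 < x₃ T + ε * Real.exp (K * T) :=
    fun ε hε => hx.pos_add_mul_exp hη hβx₁ hK₁ hK₂ h₂ h₃ hε T ⟨hT, le_rfl⟩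
  have hδ : ∀ δ > 0, ∃ ε > 0, ε * Real.exp (K * T) = δ := fun δ hδ =>
    ⟨δ / Real.exp (K * T), by positivity, div_mul_cancel₀ δ (Real.exp_pos _).ne'⟩
  constructor <;> refine le_of_forall_pos_lt_add fun δ hδpos => ?_ <;>
    obtain ⟨ε, hε, rfl⟩ := hδ δ hδpos
  · simpa using (hpos ε hε).1
  · simpa using (hpos ε hε).2

theorem x₁_eq_sub_integral (hx : IsTraj η (fun _ => β) (fun _ => γ) x₁ x₂ x₃) {t : ℝ}
    (ht : 0 ≤ t) : x₁ t = x₁ 0 - ∫ s in (0:ℝ)..t, β * x₁ s * x₃ s := by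
  rw [hx.2.2.2.1 t ht, intervalIntegral.integral_neg, sub_eq_add_neg]

theorem x₁_add_x₂_add_integral (hx : IsTraj η (fun _ => β) (fun _ => γ) x₁ x₂ x₃) {t : ℝ}
    (ht : 0 ≤ t) : x₁ t + x₂ t + η * ∫ s in (0:ℝ)..t, x₂ s = x₁ 0 + x₂ 0 := by
  have hint : ∀ f : ℝ → ℝ, ContinuousOn f (Ici 0) → IntervalIntegrable f volume 0 t :=
    fun f hf => (hf.mono Icc_subset_Ici_self).intervalIntegrable_of_Icc ht
  rw [hx.x₁_eq_sub_integral ht]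
  obtain ⟨h₁, h₂, h₃, -, e₂, -⟩ := hx
  rw [e₂ t ht, intervalIntegral.integral_sub (hint _ (by fun_prop))
    (hint _ (by fun_prop)), intervalIntegral.integral_const_mul]
  ring

theorem integrableOn_incidence (hx : IsTraj η (fun _ => β) (fun _ => γ) x₁ x₂ x₃) (hβ : 0 ≤ β)
    (h₁ : ∀ t ≥ 0, 0 ≤ x₁ t) (h₃ : ∀ t ≥ 0, 0 ≤ x₃ t) :
    IntegrableOn (fun s => β * x₁ s * x₃ s) (Ioi 0) := by
  refine integrableOn_Ioi_of_nonneg_of_intervalIntegral_le (M := x₁ 0)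
    ((continuousOn_const.mul hx.1).mul hx.2.2.1)
    (fun t ht => mul_nonneg (mul_nonneg hβ (h₁ t ht)) (h₃ t ht)) fun t ht => ?_
  linarith [hx.x₁_eq_sub_integral ht, h₁ t ht]

theorem tendsto_x₁ (hx : IsTraj η (fun _ => β) (fun _ => γ) x₁ x₂ x₃) (hβ : 0 ≤ β)
    (h₁ : ∀ t ≥ 0, 0 ≤ x₁ t) (h₃ : ∀ t ≥ 0, 0 ≤ x₃ t) :
    Tendsto x₁ atTop (𝓝 (x₁ 0 - ∫ s in Ioi 0, β * x₁ s * x₃ s)) :=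
  ((intervalIntegral_tendsto_integral_Ioi 0 (hx.integrableOn_incidence hβ h₁ h₃)
    tendsto_id).const_sub (x₁ 0)).congr'
    (eventually_ge_atTop 0 |>.mono fun _ ht => (hx.x₁_eq_sub_integral ht).symm)

theorem integrableOn_x₂ (hx : IsTraj η (fun _ => β) (fun _ => γ) x₁ x₂ x₃) (hη : 0 < η)
    (h₁ : ∀ t ≥ 0, 0 ≤ x₁ t) (h₂ : ∀ t ≥ 0, 0 ≤ x₂ t) : IntegrableOn x₂ (Ioi 0) := by
  refine integrableOn_Ioi_of_nonneg_of_intervalIntegral_le (M := (x₁ 0 + x₂ 0) / η) hx.2.1 h₂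
    fun t ht => ?_
  rw [le_div_iff₀ hη]
  linarith [hx.x₁_add_x₂_add_integral ht, h₁ t ht, h₂ t ht]

theorem integral_x₂_eq (hx : IsTraj η (fun _ => β) (fun _ => γ) x₁ x₂ x₃) (hη : η ≠ 0) {L : ℝ}
    (hx₁ : Tendsto x₁ atTop (𝓝 L)) (hx₂ : IntegrableOn x₂ (Ioi 0)) :
    ∫ t in Ioi 0, x₂ t = (x₁ 0 - L + x₂ 0) / η := by
  set S := ∫ t in Ioi 0, x₂ t
  have hlim : Tendsto x₂ atTop (𝓝 (x₁ 0 + x₂ 0 - L - η * S)) := by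
    refine ((tendsto_const_nhds.sub hx₁).sub
      ((intervalIntegral_tendsto_integral_Ioi 0 hx₂ tendsto_id).const_mul η)).congr' ?_
    filter_upwards [eventually_ge_atTop 0] with t ht
    rw [id_eq]
    linarith [hx.x₁_add_x₂_add_integral ht]
  rw [eq_div_iff hη]
  linarith [eq_zero_of_tendsto_of_integrableOn_Ioi hx₂ hlim]

end IsTraj

theorem nominal_integral_of_x2_general
    (η βmin βnom γnom Imax : ℝ)
    (hη : 0 < η) (hβm : 0 < βmin) (hβ : βmin < βnom)
    (a b c : ℝ) (hx0 : InXM η βnom γnom Imax a b c)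
    (x₁ x₂ x₃ : ℝ → ℝ)
    (hx : IsTraj η (fun _ => βnom) (fun _ => γnom) x₁ x₂ x₃)
    (ha : x₁ 0 = a) (hb : x₂ 0 = b) (hc : x₃ 0 = c) :
    ∃ xinf : ℝ, Tendsto x₁ atTop (𝓝 xinf) ∧
      IntegrableOn x₂ (Ioi 0) ∧
      ∫ t in Ioi (0:ℝ), x₂ t = (a - xinf + b) / η := by
  obtain ⟨⟨ha₀, hb₀, hc₀, -, -⟩, -, -⟩ := hx0
  subst ha hb hc
  have hβ₀ : 0 ≤ βnom := (hβm.trans hβ).le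
  have h₁ : ∀ t ≥ 0, 0 ≤ x₁ t := fun t => hx.x₁_nonneg ha₀.1
  have h₂₃ : ∀ t ≥ 0, 0 ≤ x₂ t ∧ 0 ≤ x₃ t :=
    fun t => hx.x₂_nonneg_and_x₃_nonneg hβ₀ hη.le ha₀.1 hb₀.1 hc₀.1
  have hx₁ := hx.tendsto_x₁ hβ₀ h₁ fun t ht => (h₂₃ t ht).2
  have hx₂ := hx.integrableOn_x₂ hη h₁ fun t ht => (h₂₃ t ht).1
  exact ⟨_, hx₁, hx₂, hx.integral_x₂_eq hη.ne' hx₁ hx₂⟩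

/-- along the nominal trajectory from `X_M`, `x₁(t)` converges and
`∫₀^∞ x₂ = (x₁⁰ - x₁^∞ + x₂⁰)/η` (in particular the integral is finite). -/
theorem nominal_integral_of_x2
    (η βmin βnom γnom γmax Imax : ℝ)
    (hη : 0 < η) (hβm : 0 < βmin) (hβ : βmin < βnom)
    (hγn : 0 < γnom) (hγ : γnom < γmax) (hIm : 0 < Imax) (hIm1 : Imax ≤ 1)
    (a b c : ℝ) (hx0 : InXM η βnom γnom Imax a b c)
    (x₁ x₂ x₃ : ℝ → ℝ)
    (hx : IsTraj η (fun _ => βnom) (fun _ => γnom) x₁ x₂ x₃)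
    (ha : x₁ 0 = a) (hb : x₂ 0 = b) (hc : x₃ 0 = c) :
    ∃ xinf : ℝ, Tendsto x₁ atTop (𝓝 xinf) ∧
      IntegrableOn x₂ (Ioi 0) ∧
      ∫ t in Ioi (0:ℝ), x₂ t = (a - xinf + b) / η :=
  nominal_integral_of_x2_general η βmin βnom γnom Imax hη hβm hβ a b c hx0 x₁ x₂ x₃ hx ha hb hc
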